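/- (Lemma A, part (iv).) Suppose the minorization condition holds with constant β ∈ (0,1), i.e. p_i(x, A) ≥ β Π(A) for all i ≥ 1, all x ∈ E and all measurable A. Let h : E → ℝ be a bounded measurable function, μ₀ an initial distribution, and for j > i let P^{j|i} denote the composition p_{i+1} ⋯ p_j. Then there is a constant C (depending only on β and sup|h|) such that for all n ≥ 2, | (1/n²) Σ_{j=2}^n Σ_{i=1}^{j−1} ∫∫ h(x_i) h(x_j) (μ₀ P^i)(dx_i) P^{j|i}(x_i, dx_j) − (1/2) (∫ h dΠ)² | ≤ C/n. -/

import Mathlib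

open MeasureTheory ProbabilityTheory
open scoped ENNReal

/-!
Minorization splits each `p k x` as `β • Π` plus a measure of mass `1 - β`, so one step of the
chain shrinks the distance of a function from its `Π`-mean by the factor `1 - β`, while
`Π`-invariance keeps that mean fixed. Hence `P^{j|i} h` and `∫ h d(μ₀ Pⁱ)` lie within
`2 sup|h| (1 - β)^(j-i)` resp. `2 sup|h| (1 - β)^i` of `∫ h dΠ`, every cross term is
`(∫ h dΠ)²` up to `O((1 - β)^(j-i) + (1 - β)^i)`, these errors add up to `O(n / β)`, and the
`n (n - 1) / 2` pairs produce `(1/2) (∫ h dΠ)²` up to `O(1 / n)`.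
-/

/-- `stepsFrom p i j` is the composition `p_{i+1} ⋯ p_j` (equal to the identity kernel
when `j ≤ i`), i.e. the transition kernel `P^{j|i}` from time `i` to time `j`. -/
noncomputable def stepsFrom {E : Type*} [MeasurableSpace E]
    (p : ℕ → Kernel E E) (i : ℕ) : ℕ → Kernel E E
  | 0 => Kernel.id
  | j + 1 => if j + 1 ≤ i then Kernel.id else (p (j + 1)) ∘ₖ stepsFrom p i j

/-- `stepsKernel p i = p₁ p₂ ⋯ pᵢ`, so `μ₀.bind (stepsKernel p i)` is `μ₀ Pⁱ`. -/
noncomputable abbrev stepsKernel {E : Type*} [MeasurableSpace E]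
    (p : ℕ → Kernel E E) : ℕ → Kernel E E := stepsFrom p 0

section ProbabilityIntegrals

variable {α β : Type*} [MeasurableSpace α] [MeasurableSpace β]

lemma integrable_of_abs_le {μ : Measure α} [IsFiniteMeasure μ] {f : α → ℝ} {M : ℝ}
    (hf : AEStronglyMeasurable f μ) (hM : ∀ x, |f x| ≤ M) : Integrable f μ :=
  .of_bound hf M (ae_of_all _ fun x => (Real.norm_eq_abs _).trans_le (hM x))

lemma abs_integral_le_of_abs_le {μ : Measure α} [IsProbabilityMeasure μ] {f : α → ℝ} {M : ℝ}
    (hM : ∀ x, |f x| ≤ M) : |∫ x, f x ∂μ| ≤ M := by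
  simpa using norm_integral_le_of_norm_le_const (μ := μ) (f := f) (ae_of_all _ hM)

lemma abs_integral_sub_le_of_abs_sub_le {μ : Measure α} [IsProbabilityMeasure μ] {f : α → ℝ}
    {c D : ℝ} (hf : AEStronglyMeasurable f μ) (hD : ∀ x, |f x - c| ≤ D) :
    |∫ x, f x ∂μ - c| ≤ D := by
  have hint : Integrable f μ :=
    integrable_of_abs_le (M := D + |c|) hf fun x => by
      linarith [abs_sub_abs_le_abs_sub (f x) c, hD x]
  have hcenter : ∫ x, f x ∂μ - c = ∫ x, (f x - c) ∂μ := by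
    simp [integral_sub hint (integrable_const c)]
  exact hcenter ▸ abs_integral_le_of_abs_le hD

theorem MeasureTheory.Measure.integral_bind {F : Type*} [NormedAddCommGroup F] [NormedSpace ℝ F]
    {μ : Measure α} (κ : Kernel α β) {f : β → F} (hf : Integrable f (μ.bind κ)) :
    ∫ y, f y ∂(μ.bind κ) = ∫ x, ∫ y, f y ∂κ x ∂μ := by
  rw [Measure.comp_eq_comp_const_apply] at hf
  rw [Measure.comp_eq_comp_const_apply, Kernel.integral_comp hf, Kernel.const_apply]

lemma abs_integral_bind_sub_le {μ : Measure α} [IsProbabilityMeasure μ] (κ : Kernel α β)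
    [IsMarkovKernel κ] {f : β → ℝ} {c M D : ℝ} (hf : Measurable f) (hM : ∀ y, |f y| ≤ M)
    (hD : ∀ x, |∫ y, f y ∂κ x - c| ≤ D) : |∫ y, f y ∂μ.bind κ - c| ≤ D := by
  rw [Measure.integral_bind κ (integrable_of_abs_le hf.aestronglyMeasurable hM)]
  exact abs_integral_sub_le_of_abs_sub_le
    hf.stronglyMeasurable.integral_kernel.aestronglyMeasurable hD

lemma abs_integral_mul_sub_sq_le {μ : Measure α} [IsProbabilityMeasure μ] {f g : α → ℝ}
    {m M a b : ℝ} (hf : Measurable f) (hg : Measurable g) (hfM : ∀ x, |f x| ≤ M)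
    (hmM : |m| ≤ M) (hga : ∀ x, |g x - m| ≤ a) (hfb : |∫ x, f x ∂μ - m| ≤ b) :
    |∫ x, f x * g x ∂μ - m ^ 2| ≤ M * (a + b) := by
  have hfg : ∀ x, |f x * (g x - m)| ≤ M * a := fun x => by
    rw [abs_mul]
    exact mul_le_mul (hfM x) (hga x) (abs_nonneg _) ((abs_nonneg _).trans (hfM x))
  have hsplit : ∫ x, f x * g x ∂μ = ∫ x, f x * (g x - m) ∂μ + m * ∫ x, f x ∂μ := by
    have h₁ : Integrable (fun x => f x * (g x - m)) μ :=
      integrable_of_abs_le (hf.mul (hg.sub_const m)).aestronglyMeasurable hfg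
    have h₂ := integrable_of_abs_le (μ := μ) hf.aestronglyMeasurable hfM
    rw [← integral_const_mul, ← integral_add h₁ (h₂.const_mul m)]
    congr 1 with x
    ring
  calc |∫ x, f x * g x ∂μ - m ^ 2|
      = |∫ x, f x * (g x - m) ∂μ + m * (∫ x, f x ∂μ - m)| := by rw [hsplit]; congr 1; ring
    _ ≤ |∫ x, f x * (g x - m) ∂μ| + |m| * |∫ x, f x ∂μ - m| :=
      (abs_add_le _ _).trans_eq (by rw [abs_mul])
    _ ≤ M * a + M * b := add_le_add (abs_integral_le_of_abs_le hfg)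
      (mul_le_mul hmM hfb (abs_nonneg _) ((abs_nonneg _).trans hmM))
    _ = M * (a + b) := by ring

end ProbabilityIntegrals

section Minorization

variable {α : Type*} [MeasurableSpace α] {ν π : Measure α} [IsProbabilityMeasure ν]
  [IsProbabilityMeasure π] {β : ℝ}

lemma abs_integral_sub_mul_integral_le_of_minorization (hβ : 0 ≤ β)
    (hmin : ∀ A, MeasurableSet A → ENNReal.ofReal β * π A ≤ ν A) {g : α → ℝ} {D : ℝ}
    (hg : Measurable g) (hD : ∀ x, |g x| ≤ D) :
    |∫ x, g x ∂ν - β * ∫ x, g x ∂π| ≤ (1 - β) * D := by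
  have hle : ENNReal.ofReal β • π ≤ ν := Measure.le_iff.2 hmin
  have : IsFiniteMeasure (ENNReal.ofReal β • π) := isFiniteMeasure_of_le ν hle
  set ρ := ν - ENNReal.ofReal β • π
  have hν : ν = ρ + ENNReal.ofReal β • π := (Measure.sub_add_cancel_of_le hle).symm
  have hρ : ρ.real Set.univ = 1 - β := by
    have := congrArg (fun μ : Measure α => μ.real Set.univ) hν
    rw [probReal_univ (μ := ν), measureReal_add_apply, measureReal_ennreal_smul_apply,
      ENNReal.toReal_ofReal hβ, probReal_univ (μ := π)] at this
    linarith
  have hint : Integrable g (ρ + ENNReal.ofReal β • π) :=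
    hν ▸ integrable_of_abs_le hg.aestronglyMeasurable hD
  have hsplit : ∫ x, g x ∂ν = ∫ x, g x ∂ρ + β * ∫ x, g x ∂π := by
    rw [hν, integral_add_measure (integrable_add_measure.1 hint).1
      (integrable_add_measure.1 hint).2, integral_smul_measure, ENNReal.toReal_ofReal hβ,
      smul_eq_mul]
  rw [hsplit, add_sub_cancel_right, ← hρ, mul_comm]
  exact norm_integral_le_of_norm_le_const (f := g) (ae_of_all _ hD)

lemma abs_integral_sub_integral_le_of_minorization (hβ : 0 ≤ β)
    (hmin : ∀ A, MeasurableSet A → ENNReal.ofReal β * π A ≤ ν A) {f : α → ℝ} {D : ℝ}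
    (hf : Measurable f) (hD : ∀ x, |f x - ∫ y, f y ∂π| ≤ D) :
    |∫ x, f x ∂ν - ∫ x, f x ∂π| ≤ (1 - β) * D := by
  set m := ∫ y, f y ∂π
  have hcenter (μ : Measure α) [IsProbabilityMeasure μ] :
      ∫ x, (f x - m) ∂μ = ∫ x, f x ∂μ - m := by
    have hint : Integrable f μ := integrable_of_abs_le (M := D + |m|) hf.aestronglyMeasurable
      fun x => by linarith [abs_sub_abs_le_abs_sub (f x) m, hD x]
    simp [integral_sub hint (integrable_const m)]
  have := abs_integral_sub_mul_integral_le_of_minorization hβ hmin (hf.sub_const m) hD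
  rwa [hcenter ν, hcenter π, sub_self, mul_zero, sub_zero] at this

end Minorization

section Steps

variable {E : Type*} [MeasurableSpace E] (p : ℕ → Kernel E E)

lemma stepsFrom_of_le {i j : ℕ} (hj : j ≤ i) : stepsFrom p i j = Kernel.id := by
  cases j with
  | zero => rfl
  | succ j => rw [stepsFrom, if_pos hj]

lemma stepsFrom_succ {i j : ℕ} (hij : i ≤ j) :
    stepsFrom p i (j + 1) = p (j + 1) ∘ₖ stepsFrom p i j := by
  rw [stepsFrom, if_neg (by omega)]

instance isMarkovKernel_stepsFrom [∀ i, IsMarkovKernel (p i)] (i j : ℕ) :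
    IsMarkovKernel (stepsFrom p i j) := by
  induction j with
  | zero => exact inferInstanceAs (IsMarkovKernel Kernel.id)
  | succ j ih => rw [stepsFrom]; split <;> infer_instance

variable {p} [∀ i, IsMarkovKernel (p i)] {π : Measure E} [IsProbabilityMeasure π] {β : ℝ}

theorem abs_integral_stepsFrom_sub_le (hβ : 0 ≤ β) (hinv : ∀ k ≥ 1, π.bind (p k) = π)
    (hmin : ∀ k ≥ 1, ∀ x A, MeasurableSet A → ENNReal.ofReal β * π A ≤ p k x A)
    {i j : ℕ} (hij : i ≤ j) {f : E → ℝ} {D : ℝ} (hf : Measurable f)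
    (hD : ∀ y, |f y - ∫ z, f z ∂π| ≤ D) (x : E) :
    |∫ y, f y ∂stepsFrom p i j x - ∫ y, f y ∂π| ≤ (1 - β) ^ (j - i) * D := by
  obtain ⟨d, rfl⟩ := Nat.exists_eq_add_of_le hij
  rw [Nat.add_sub_cancel_left]
  clear hij
  induction d generalizing f D x with
  | zero =>
    rw [add_zero, stepsFrom_of_le p le_rfl, Kernel.id_apply,
      integral_dirac' _ _ hf.stronglyMeasurable, pow_zero, one_mul]
    exact hD x
  | succ d ih =>
    have hint (ν : Measure E) [IsProbabilityMeasure ν] : Integrable f ν :=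
      integrable_of_abs_le (M := D + |∫ z, f z ∂π|) hf.aestronglyMeasurable
        fun y => by linarith [abs_sub_abs_le_abs_sub (f y) (∫ z, f z ∂π), hD y]
    set g : E → ℝ := fun z => ∫ y, f y ∂p (i + d + 1) z
    have hg : Measurable g := hf.stronglyMeasurable.integral_kernel.measurable
    have hgπ : ∫ z, g z ∂π = ∫ y, f y ∂π := by
      rw [← Measure.integral_bind _ (hint _), hinv _ (by omega)]
    have hgD (z : E) : |g z - ∫ y, g y ∂π| ≤ (1 - β) * D :=
      hgπ ▸ abs_integral_sub_integral_le_of_minorization hβ (hmin _ (by omega) z) hf hD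
    have hcomp :
        ∫ y, f y ∂stepsFrom p i (i + (d + 1)) x = ∫ z, g z ∂stepsFrom p i (i + d) x := by
      rw [← add_assoc, stepsFrom_succ p (by omega), Kernel.integral_comp (hint _)]
    rw [hcomp, ← hgπ, pow_succ, mul_assoc]
    exact ih hg hgD x

end Steps

section PairSums

open Finset

variable {r : ℝ}

lemma sum_pow_le_inv_one_sub (hr₀ : 0 ≤ r) (hr₁ : r < 1) (s : Finset ℕ) :
    ∑ i ∈ s, r ^ i ≤ (1 - r)⁻¹ :=
  (Summable.sum_le_tsum s (fun i _ => pow_nonneg hr₀ i)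
    (summable_geometric_of_lt_one hr₀ hr₁)).trans_eq (tsum_geometric_of_lt_one hr₀ hr₁)

lemma sum_Icc_pow_sub_add_pow_le (hr₀ : 0 ≤ r) (hr₁ : r < 1) (j : ℕ) :
    ∑ i ∈ Icc 1 (j - 1), (r ^ (j - i) + r ^ i) ≤ 2 * (1 - r)⁻¹ := by
  rw [sum_add_distrib, two_mul]
  refine add_le_add ?_ (sum_pow_le_inv_one_sub hr₀ hr₁ _)
  rw [← sum_image (f := (r ^ ·)) fun a ha b hb hab => by
    simp only [coe_Icc, Set.mem_Icc] at ha hb; omega]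
  exact sum_pow_le_inv_one_sub hr₀ hr₁ _

lemma sum_Icc_two_card_Icc_one_pred (n : ℕ) :
    ∑ j ∈ Icc 2 n, (#(Icc 1 (j - 1)) : ℝ) = n * (n - 1) / 2 := by
  induction n with
  | zero => simp
  | succ n ih =>
    rcases Nat.lt_or_ge n 1 with hn | hn
    · obtain rfl : n = 0 := by omega
      simp
    · rw [sum_Icc_succ_top (by omega), ih, Nat.card_Icc]
      push_cast
      ring

theorem abs_sum_pairs_div_sq_sub_half_le {t : ℕ → ℕ → ℝ} {a K : ℝ} (hK : 0 ≤ K) (hr₀ : 0 ≤ r)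
    (hr₁ : r < 1) {n : ℕ} (hn : 0 < n)
    (ht : ∀ j ∈ Icc 2 n, ∀ i ∈ Icc 1 (j - 1), |t j i - a| ≤ K * (r ^ (j - i) + r ^ i)) :
    |1 / (n : ℝ) ^ 2 * ∑ j ∈ Icc 2 n, ∑ i ∈ Icc 1 (j - 1), t j i - 1 / 2 * a|
      ≤ (2 * K * (1 - r)⁻¹ + |a| / 2) / n := by
  set err := ∑ j ∈ Icc 2 n, ∑ i ∈ Icc 1 (j - 1), (t j i - a)
  have hcount : ∑ j ∈ Icc 2 n, ∑ i ∈ Icc 1 (j - 1), a = n * (n - 1) / 2 * a := by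
    simp only [sum_const, nsmul_eq_mul, ← sum_mul, sum_Icc_two_card_Icc_one_pred]
  have herr : |err| ≤ n * (2 * K * (1 - r)⁻¹) := by
    calc |err| ≤ ∑ j ∈ Icc 2 n, ∑ i ∈ Icc 1 (j - 1), |t j i - a| :=
          (abs_sum_le_sum_abs _ _).trans (sum_le_sum fun j _ => abs_sum_le_sum_abs _ _)
      _ ≤ ∑ j ∈ Icc 2 n, 2 * K * (1 - r)⁻¹ := sum_le_sum fun j hj =>
          (sum_le_sum (ht j hj)).trans <| by
            rw [← mul_sum]
            exact (mul_le_mul_of_nonneg_left (sum_Icc_pow_sub_add_pow_le hr₀ hr₁ j) hK).trans_eq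
              (by ring)
      _ ≤ n * (2 * K * (1 - r)⁻¹) := by
          rw [sum_const, nsmul_eq_mul, Nat.card_Icc]
          have : 0 ≤ (1 - r)⁻¹ := inv_nonneg.2 (by linarith)
          gcongr
          exact_mod_cast (by omega : n + 1 - 2 ≤ n)
  have hn' : (0 : ℝ) < n := by exact_mod_cast hn
  have hsplit : 1 / (n : ℝ) ^ 2 * ∑ j ∈ Icc 2 n, ∑ i ∈ Icc 1 (j - 1), t j i - 1 / 2 * a
      = err / n ^ 2 - a / (2 * n) := by
    have : ∑ j ∈ Icc 2 n, ∑ i ∈ Icc 1 (j - 1), t j i = err + n * (n - 1) / 2 * a := by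
      simp only [err, ← hcount, ← sum_add_distrib, sub_add_cancel]
    rw [this]
    field_simp
    ring
  calc _ = |err / n ^ 2 - a / (2 * n)| := by rw [hsplit]
    _ ≤ |err| / n ^ 2 + |a| / (2 * n) := by
        refine (abs_sub _ _).trans_eq ?_
        rw [abs_div, abs_div, abs_of_pos (by positivity : (0 : ℝ) < n ^ 2),
          abs_of_pos (by positivity : (0 : ℝ) < 2 * n)]
    _ ≤ n * (2 * K * (1 - r)⁻¹) / n ^ 2 + |a| / (2 * n) := by gcongr
    _ = (2 * K * (1 - r)⁻¹ + |a| / 2) / n := by field_simp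

end PairSums

theorem cross_moment_bound_of_minorization_general
    (β hmax : ℝ) (hβ0 : 0 < β) :
    ∃ C : ℝ, ∀ (E : Type) [MeasurableSpace E]
      (Pi : Measure E) [IsProbabilityMeasure Pi]
      (p : ℕ → Kernel E E) [∀ i, IsMarkovKernel (p i)],
      (∀ i ≥ 1, ∀ A : Set E, MeasurableSet A → ∫⁻ x, p i x A ∂Pi = Pi A) →
      (∀ i ≥ 1, ∀ x : E, ∀ A : Set E, MeasurableSet A →
        ENNReal.ofReal β * Pi A ≤ p i x A) →
      ∀ (h : E → ℝ), Measurable h → (∀ x, |h x| ≤ hmax) →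
      ∀ (μ₀ : Measure E), IsProbabilityMeasure μ₀ →
      ∀ n : ℕ, 2 ≤ n →
        |(1 / (n : ℝ) ^ 2) * (∑ j ∈ Finset.Icc 2 n, ∑ i ∈ Finset.Icc 1 (j - 1),
            ∫ x, h x * ∫ y, h y ∂(stepsFrom p i j x)
              ∂(μ₀.bind (fun x₀ => stepsKernel p i x₀)))
          - (1 / 2) * (∫ x, h x ∂Pi) ^ 2| ≤ C / n := by
  refine ⟨4 * hmax ^ 2 / β + hmax ^ 2 / 2, ?_⟩
  intro E _ Pi _ p _ hinv hmin h hh hhmax μ₀ _ n hn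
  obtain ⟨x₀⟩ := nonempty_of_isProbabilityMeasure Pi
  have hβ1 : β ≤ 1 := by simpa using hmin 1 le_rfl x₀ Set.univ MeasurableSet.univ
  have hbind : ∀ k ≥ 1, Pi.bind (p k) = Pi := fun k hk => Measure.ext fun A hA => by
    rw [Measure.bind_apply hA (Kernel.aemeasurable _)]
    exact hinv k hk A hA
  set m := ∫ x, h x ∂Pi
  have hm : |m| ≤ hmax := abs_integral_le_of_abs_le hhmax
  have hosc {i j : ℕ} (hij : i ≤ j) (x : E) :
      |∫ y, h y ∂stepsFrom p i j x - m| ≤ (1 - β) ^ (j - i) * (2 * hmax) :=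
    abs_integral_stepsFrom_sub_le hβ0.le hbind hmin hij hh
      (fun y => (abs_sub _ _).trans (by linarith [hhmax y])) x
  have hstart (i : ℕ) :
      |∫ y, h y ∂(μ₀.bind (stepsKernel p i)) - m| ≤ (1 - β) ^ i * (2 * hmax) :=
    abs_integral_bind_sub_le _ hh hhmax fun x => by
      simpa only [Nat.sub_zero] using hosc (Nat.zero_le i) x
  refine (abs_sum_pairs_div_sq_sub_half_le (K := 2 * hmax ^ 2) (r := 1 - β) (by positivity)
    (by linarith) (by linarith) (by omega) fun j hj i hi => ?_).trans ?_
  · simp only [Finset.mem_Icc] at hj hi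
    exact (abs_integral_mul_sub_sq_le hh hh.stronglyMeasurable.integral_kernel.measurable hhmax
      hm (hosc (by omega)) (hstart i)).trans_eq (by ring)
  · rw [sub_sub_cancel, abs_of_nonneg (sq_nonneg m)]
    gcongr ?_ / _
    have : m ^ 2 ≤ hmax ^ 2 := sq_le_sq' (abs_le.1 hm).1 (abs_le.1 hm).2
    calc 2 * (2 * hmax ^ 2) * β⁻¹ + m ^ 2 / 2 = 4 * hmax ^ 2 / β + m ^ 2 / 2 := by ring
      _ ≤ _ := by gcongr

/-- **Lemma A, part (iv).** Under the minorization condition with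
constant `β ∈ (0,1)`, for `h` bounded by `hmax` there is a constant `C` depending
only on `β` and `hmax` such that for all `n ≥ 2`,
`|(1/n²) ∑_{j=2}^n ∑_{i=1}^{j−1} ∫∫ h(xᵢ)h(x_j) (μ₀Pⁱ)(dxᵢ) P^{j|i}(xᵢ,dx_j)
  − (1/2)(∫ h dΠ)²| ≤ C/n`. -/
theorem cross_moment_bound_of_minorization
    (β hmax : ℝ) (hβ0 : 0 < β) (hβ1 : β < 1) (hmax0 : 0 ≤ hmax) :
    ∃ C : ℝ, ∀ (E : Type) [MeasurableSpace E]
      (Pi : Measure E) [IsProbabilityMeasure Pi]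
      (p : ℕ → Kernel E E) [∀ i, IsMarkovKernel (p i)],
      (∀ i ≥ 1, ∀ A : Set E, MeasurableSet A → ∫⁻ x, p i x A ∂Pi = Pi A) →
      (∀ i ≥ 1, ∀ x : E, ∀ A : Set E, MeasurableSet A →
        ENNReal.ofReal β * Pi A ≤ p i x A) →
      ∀ (h : E → ℝ), Measurable h → (∀ x, |h x| ≤ hmax) →
      ∀ (μ₀ : Measure E), IsProbabilityMeasure μ₀ →
      ∀ n : ℕ, 2 ≤ n →
        |(1 / (n : ℝ) ^ 2) * (∑ j ∈ Finset.Icc 2 n, ∑ i ∈ Finset.Icc 1 (j - 1),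
            ∫ x, h x * ∫ y, h y ∂(stepsFrom p i j x)
              ∂(μ₀.bind (fun x₀ => stepsKernel p i x₀)))
          - (1 / 2) * (∫ x, h x ∂Pi) ^ 2| ≤ C / n :=
  cross_moment_bound_of_minorization_general β hmax hβ0
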